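/- Let K_1, ..., K_s be closed convex cones in R^n with vertex at 0. If the convex conic hull K = conv(K_1 ∪ ... ∪ K_s) is not closed, then there exist vectors λ_1 ∈ K_1, ..., λ_s ∈ K_s, not all zero, such that λ_1 + ... + λ_s = 0. -/
import Mathlib


open Filter Topology

theorem stmt1 (n s : ℕ) (K : Fin s → Set (EuclideanSpace ℝ (Fin n)))
    (hne : ∀ i, (K i).Nonempty)
    (hcl : ∀ i, IsClosed (K i))
    (hconv : ∀ i, Convex ℝ (K i))
    (hcone : ∀ i, ∀ y ∈ K i, ∀ α : ℝ, 0 ≤ α → α • y ∈ K i)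
    (hK : ¬ IsClosed (convexHull ℝ (⋃ i, K i))) :
    ∃ lam : Fin s → EuclideanSpace ℝ (Fin n),
      (∀ i, lam i ∈ K i) ∧ (∃ i, lam i ≠ 0) ∧ (∑ i, lam i = 0) := by
  classical
  by_contra hno
  push_neg at hno
  have hzero : ∀ lam : Fin s → EuclideanSpace ℝ (Fin n), (∀ i, lam i ∈ K i) → (∑ i, lam i) = 0 →
      ∀ i, lam i = 0 := by
    intro lam hmem hsum
    by_contra h
    push_neg at h
    exact hno lam hmem h hsum
  have h0 : ∀ i, (0 : EuclideanSpace ℝ (Fin n)) ∈ K i := by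
    intro i
    obtain ⟨y, hy⟩ := hne i
    simpa using hcone i y hy 0 le_rfl
  -- handle s = 0
  rcases Nat.eq_zero_or_pos s with hs0 | hspos
  · subst hs0
    apply hK
    have : (⋃ i : Fin 0, K i) = ∅ := Set.iUnion_of_empty K
    rw [this, convexHull_empty]
    exact isClosed_empty
  -- the sum set
  set S : Set (EuclideanSpace ℝ (Fin n)) := {x | ∃ lam : Fin s → EuclideanSpace ℝ (Fin n), (∀ i, lam i ∈ K i) ∧ ∑ i, lam i = x}
    with hSdef
  have hSconv : Convex ℝ S := by
    rintro x ⟨f, hf, rfl⟩ y ⟨g, hg, rfl⟩ a b ha hb hab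
    refine ⟨fun i => a • f i + b • g i, fun i => hconv i (hf i) (hg i) ha hb hab, ?_⟩
    simp [Finset.sum_add_distrib, Finset.smul_sum]
  have hUS : (⋃ i, K i) ⊆ S := by
    rintro x hx
    obtain ⟨i, hxi⟩ := Set.mem_iUnion.1 hx
    refine ⟨Pi.single i x, ?_, ?_⟩
    · intro j
      by_cases hji : j = i
      · subst hji; simpa [Pi.single_eq_same] using hxi
      · simp [Pi.single_eq_of_ne hji, h0 j]
    · simp [Finset.sum_pi_single']
  have hSsub : S ⊆ convexHull ℝ (⋃ i, K i) := by
    rintro x ⟨lam, hlam, rfl⟩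
    have hs' : (0:ℝ) < (s:ℝ) := by exact_mod_cast hspos
    have hmem : ∀ i ∈ Finset.univ, ((s:ℝ) • lam i) ∈ ⋃ j, K j := by
      intro i _
      exact Set.mem_iUnion.2 ⟨i, hcone i (lam i) (hlam i) (s:ℝ) hs'.le⟩
    have := Finset.centerMass_mem_convexHull (t := Finset.univ)
      (w := fun _ : Fin s => (1:ℝ)) (z := fun i => (s:ℝ) • lam i)
      (fun i _ => zero_le_one) (by simpa using hs') hmem
    have hcm : (Finset.univ.centerMass (fun _ : Fin s => (1:ℝ))
        (fun i => (s:ℝ) • lam i)) = ∑ i, lam i := by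
      rw [Finset.centerMass]
      simp only [one_smul, Finset.sum_const, nsmul_eq_mul, mul_one,
        Finset.card_univ, Fintype.card_fin]
      rw [← Finset.smul_sum, smul_smul, inv_mul_cancel₀ hs'.ne', one_smul]
    rwa [hcm] at this
  have hSeq : convexHull ℝ (⋃ i, K i) = S :=
    le_antisymm (convexHull_min hUS hSconv) hSsub
  apply hK
  rw [hSeq]
  -- now show S is closed
  set C : Set (Fin s → EuclideanSpace ℝ (Fin n)) := Set.univ.pi K with hCdef
  have hCcl : IsClosed C := isClosed_set_pi fun i _ => hcl i
  have hCmem : ∀ f, f ∈ C ↔ ∀ i, f i ∈ K i := by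
    intro f; simp [hCdef, Set.mem_pi]
  set g : (Fin s → EuclideanSpace ℝ (Fin n)) → EuclideanSpace ℝ (Fin n) := fun f => ∑ i, f i with hgdef
  have hgc : Continuous g := continuous_finset_sum _ fun i _ => continuous_apply i
  have hgsmul : ∀ (c : ℝ) (f : Fin s → EuclideanSpace ℝ (Fin n)), g (c • f) = c • g f := by
    intro c f
    simp [hgdef, Finset.smul_sum]
  have hCcone : ∀ f ∈ C, ∀ α : ℝ, 0 ≤ α → α • f ∈ C := by
    intro f hf α hα
    rw [hCmem] at hf ⊢
    intro i
    exact hcone i (f i) (hf i) α hα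
  have hker : ∀ f ∈ C, g f = 0 → f = 0 := by
    intro f hf hgf
    funext i
    exact hzero f ((hCmem f).1 hf) hgf i
  -- lower bound
  have key : ∃ c : ℝ, 0 < c ∧ ∀ f ∈ C, c * ‖f‖ ≤ ‖g f‖ := by
    by_cases hCS : (C ∩ Metric.sphere 0 1).Nonempty
    · have hcomp : IsCompact (C ∩ Metric.sphere 0 1) :=
        (isCompact_sphere 0 1).inter_left hCcl
      obtain ⟨f0, hf0, hmin⟩ := hcomp.exists_isMinOn hCS
        ((hgc.norm).continuousOn)
      have hf0ne : f0 ≠ 0 := by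
        intro h
        have := hf0.2
        rw [h] at this
        simp at this
      have hc : 0 < ‖g f0‖ := by
        rcases (norm_pos_iff).2 (fun h => hf0ne (hker f0 hf0.1 h)) with h
        exact h
      refine ⟨‖g f0‖, hc, ?_⟩
      intro f hf
      rcases eq_or_ne f 0 with rfl | hfne
      · simp [hgdef]
      · have hnf : 0 < ‖f‖ := norm_pos_iff.2 hfne
        have hu : (‖f‖⁻¹ • f) ∈ C ∩ Metric.sphere 0 1 := by
          constructor
          · exact hCcone f hf _ (inv_nonneg.2 hnf.le)
          · simp [norm_smul, abs_of_nonneg (inv_nonneg.2 hnf.le),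
              inv_mul_cancel₀ hnf.ne']
        have hle : ‖g f0‖ ≤ ‖g (‖f‖⁻¹ • f)‖ := hmin hu
        have hgu : ‖g (‖f‖⁻¹ • f)‖ = ‖f‖⁻¹ * ‖g f‖ := by
          rw [hgsmul, norm_smul, Real.norm_eq_abs,
            abs_of_nonneg (inv_nonneg.2 hnf.le)]
        rw [hgu] at hle
        calc ‖g f0‖ * ‖f‖ ≤ (‖f‖⁻¹ * ‖g f‖) * ‖f‖ := by
              exact mul_le_mul_of_nonneg_right hle hnf.le
          _ = ‖g f‖ := by field_simp
    · -- C = {0}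
      refine ⟨1, one_pos, ?_⟩
      intro f hf
      have hf0 : f = 0 := by
        by_contra hfne
        have hnf : 0 < ‖f‖ := norm_pos_iff.2 hfne
        exact hCS ⟨‖f‖⁻¹ • f, hCcone f hf _ (inv_nonneg.2 hnf.le), by
          simp [norm_smul, abs_of_nonneg (inv_nonneg.2 hnf.le),
            inv_mul_cancel₀ hnf.ne']⟩
      subst hf0
      simp [hgdef]
  obtain ⟨c, hc, hbound⟩ := key
  -- S is sequentially closed
  apply IsSeqClosed.isClosed
  intro u x hu hx
  choose lam hlam hsum using hu
  -- bound on norms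
  have hbdd : BddAbove (Set.range fun k => ‖u k‖) :=
    (hx.norm).bddAbove_range
  obtain ⟨M, hM⟩ := hbdd
  have hlamC : ∀ k, lam k ∈ C := fun k => (hCmem _).2 (hlam k)
  have hlambd : ∀ k, lam k ∈ C ∩ Metric.closedBall 0 (c⁻¹ * M) := by
    intro k
    refine ⟨hlamC k, ?_⟩
    rw [Metric.mem_closedBall, dist_zero_right]
    have h1 : c * ‖lam k‖ ≤ ‖g (lam k)‖ := hbound _ (hlamC k)
    have h2 : ‖g (lam k)‖ = ‖u k‖ := by rw [hgdef]; simp only; rw [hsum k]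
    have h3 : ‖u k‖ ≤ M := hM ⟨k, rfl⟩
    have : c * ‖lam k‖ ≤ M := by rw [h2] at h1; linarith
    calc ‖lam k‖ = c⁻¹ * (c * ‖lam k‖) := by field_simp
      _ ≤ c⁻¹ * M := by
          exact mul_le_mul_of_nonneg_left this (inv_nonneg.2 hc.le)
  have hcomp : IsCompact (C ∩ Metric.closedBall 0 (c⁻¹ * M)) :=
    (isCompact_closedBall 0 _).inter_left hCcl
  obtain ⟨f, hfmem, φ, hφ, hflim⟩ := hcomp.tendsto_subseq hlambd
  have hgf : Tendsto (fun k => g (lam (φ k))) atTop (𝓝 (g f)) :=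
    (hgc.tendsto f).comp hflim
  have hgf' : Tendsto (fun k => g (lam (φ k))) atTop (𝓝 x) := by
    have : (fun k => g (lam (φ k))) = (fun k => u (φ k)) := by
      funext k; rw [hgdef]; simp only; rw [hsum]
    rw [this]
    exact hx.comp hφ.tendsto_atTop
  have hfx : g f = x := tendsto_nhds_unique hgf hgf'
  exact ⟨f, (hCmem f).1 hfmem.1, hfx⟩
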